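/- arXiv:2305.14393 — 7 statements merged into one kernel-verified Lean document; each statement's English description precedes it below -/
import Mathlib

section
/- For every positive integer n and every real number m such that all the relevant trigonometric functions are defined (i.e., 2^{-p} m and 2^{-p-1} m are not odd multiples of π/2 for 0 ≤ p ≤ n, and m is not a multiple of π/2), one has ∑_{p=0}^{n} 2^{-p-1} tan(m·2^{-p-1}) sec(m·2^{-p}) = csc(2m) − 2^{-n-1} csc(m·2^{-n}). -/
open Real Finset

lemma term_id (x : ℝ) (h1 : Real.cos (x/2) ≠ 0) (h2 : Real.cos x ≠ 0)
    (h3 : Real.sin x ≠ 0) :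
    Real.tan (x/2) * (Real.cos x)⁻¹ = 2 * (Real.sin (2*x))⁻¹ - (Real.sin x)⁻¹ := by
  have hs : Real.sin x = 2 * Real.sin (x/2) * Real.cos (x/2) := by
    rw [← Real.sin_two_mul]; ring_nf
  have hc : Real.cos x = 1 - 2 * Real.sin (x/2) ^ 2 := by
    have h := Real.cos_two_mul' (x/2)
    rw [show 2 * (x/2) = x by ring] at h
    have := Real.sin_sq_add_cos_sq (x/2)
    linarith
  rw [Real.tan_eq_sin_div_cos, Real.sin_two_mul]
  have h4 : Real.sin (x/2) ≠ 0 := by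
    intro h; apply h3; rw [hs, h]; ring
  field_simp
  rw [hs, hc]; ring

theorem finite_sum_tan_sec (n : ℕ) (hn : 0 < n) (m : ℝ)
    (hcos : ∀ p : ℕ, p ≤ n → Real.cos (m * (2:ℝ)^(-(p:ℤ))) ≠ 0 ∧
      Real.cos (m * (2:ℝ)^(-(p:ℤ)-1)) ≠ 0)
    (hm : Real.sin (2*m) ≠ 0) :
    ∑ p ∈ Finset.range (n+1),
      (2:ℝ)^(-(p:ℤ)-1) * Real.tan (m * (2:ℝ)^(-(p:ℤ)-1)) * (Real.cos (m * (2:ℝ)^(-(p:ℤ))))⁻¹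
    = (Real.sin (2*m))⁻¹ - (2:ℝ)^(-(n:ℤ)-1) * (Real.sin (m * (2:ℝ)^(-(n:ℤ))))⁻¹ := by
  -- sin (m * 2^(-p)) ≠ 0 for p ≤ n
  have hsin : ∀ p : ℕ, p ≤ n → Real.sin (m * (2:ℝ)^(-(p:ℤ))) ≠ 0 := by
    intro p
    induction p with
    | zero =>
        intro _ h
        apply hm
        simp only [Nat.cast_zero, neg_zero, zpow_zero, mul_one] at h
        rw [Real.sin_two_mul, h]
        ring
    | succ q ih =>
        intro hq
        have hq' : q ≤ n := Nat.le_of_succ_le hq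
        have hsq := ih hq'
        intro h
        apply hsq
        have key : m * (2:ℝ)^(-(q:ℤ)) = 2 * (m * (2:ℝ)^(-((q+1:ℕ):ℤ))) := by
          push_cast
          rw [show -((q:ℤ)+1) = -(q:ℤ) - 1 by ring, zpow_sub₀ (by norm_num : (2:ℝ) ≠ 0)]
          ring
        rw [key, Real.sin_two_mul, h]
        ring
  -- telescoping
  set f : ℕ → ℝ := fun p => (2:ℝ)^(-(p:ℤ)) * (Real.sin (2 * (m * (2:ℝ)^(-(p:ℤ)))))⁻¹ with hf
  have hterm : ∀ p ∈ Finset.range (n+1),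
      (2:ℝ)^(-(p:ℤ)-1) * Real.tan (m * (2:ℝ)^(-(p:ℤ)-1)) * (Real.cos (m * (2:ℝ)^(-(p:ℤ))))⁻¹
      = f p - f (p+1) := by
    intro p hp
    have hp' : p ≤ n := Nat.lt_succ_iff.mp (Finset.mem_range.mp hp)
    obtain ⟨hc1, hc2⟩ := hcos p hp'
    have hs1 := hsin p hp'
    have hx : m * (2:ℝ)^(-(p:ℤ)-1) = (m * (2:ℝ)^(-(p:ℤ))) / 2 := by
      rw [zpow_sub₀ (by norm_num : (2:ℝ) ≠ 0)]
      ring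
    have hid := term_id (m * (2:ℝ)^(-(p:ℤ))) (hx ▸ hc2) hc1 hs1
    rw [hx] at hc2 ⊢
    have hnext : 2 * (m * (2:ℝ)^(-((p+1:ℕ):ℤ))) = m * (2:ℝ)^(-(p:ℤ)) := by
      push_cast
      rw [show -((p:ℤ)+1) = -(p:ℤ) - 1 by ring, zpow_sub₀ (by norm_num : (2:ℝ) ≠ 0)]
      ring
    simp only [hf, hnext]
    have hcast : -(((p+1:ℕ)):ℤ) = -(p:ℤ) - 1 := by push_cast; ring
    rw [hcast, zpow_sub₀ (by norm_num : (2:ℝ) ≠ 0)]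
    rw [mul_assoc, hid]
    ring
  rw [Finset.sum_congr rfl hterm, Finset.sum_range_sub' f]
  have hf0 : f 0 = (Real.sin (2*m))⁻¹ := by simp [hf]
  have hfn : f (n+1) = (2:ℝ)^(-(n:ℤ)-1) * (Real.sin (m * (2:ℝ)^(-(n:ℤ))))⁻¹ := by
    simp only [hf]
    have h1 : 2 * (m * (2:ℝ)^(-((n+1:ℕ):ℤ))) = m * (2:ℝ)^(-(n:ℤ)) := by
      push_cast
      rw [show -((n:ℤ)+1) = -(n:ℤ) - 1 by ring, zpow_sub₀ (by norm_num : (2:ℝ) ≠ 0)]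
      ring
    rw [h1]
    congr 1
    push_cast
    ring_nf
  rw [hf0, hfn]
end

section
/- For every positive integer n and all real numbers m, r such that none of the cosines cos(2^{-p} m), cos(2^{-p} r), cos(2^{-1-p} m), cos(2^{-1-p} r) for 0 ≤ p ≤ n vanish and tan(m), tan(r), tan(2^{-1-n} m), tan(2^{-1-n} r) are defined and nonzero, one has ∏_{p=0}^{n} [cos(2^{-p} m)/cos(2^{-p} r)] · [cos(2^{-1-p} r)/cos(2^{-1-p} m)]² = tan(2^{-1-n} m)·tan(r) / (tan(m)·tan(2^{-1-n} r)). -/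
open Real Finset

/-! Since `tan (2y) = 2 tan y / (1 - tan² y)` and `cos (2y) / cos² y = 1 - tan² y`, each factor
`cos (2y) / cos² y` equals `2 tan y / tan (2y)`. With `y = 2^(-1-p) x` the product over `p ≤ n`
therefore telescopes to `2^(n+1) tan (2^(-1-n) x) / tan x`, and the powers of two cancel in the
ratio of the products for `x = m` and `x = r`. -/

theorem cos_two_mul_div_cos_sq {y : ℝ} (hy : sin y ≠ 0) :
    cos (2 * y) / cos y ^ 2 = 2 * tan y / tan (2 * y) := by
  rw [tan_eq_sin_div_cos, tan_eq_sin_div_cos, sin_two_mul]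
  -- when `cos y` or `cos (2 * y)` vanishes, both sides are `0` because `x / 0 = 0`
  rcases eq_or_ne (cos y) 0 with hc | hc
  · simp [hc]
  rcases eq_or_ne (cos (2 * y)) 0 with hc2 | hc2
  · simp [hc2]
  field_simp

theorem prod_cos_div_cos_succ_sq {x : ℕ → ℝ} (hx : ∀ p, x p = 2 * x (p + 1)) {n : ℕ}
    (hcos : ∀ p ≤ n, cos (x (p + 1)) ≠ 0) (hsin : sin (x (n + 1)) ≠ 0) :
    ∏ p ∈ range (n + 1), cos (x p) / cos (x (p + 1)) ^ 2
      = 2 ^ (n + 1) * tan (x (n + 1)) / tan (x 0) := by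
  have hstep (p : ℕ) (hs : sin (x (p + 1)) ≠ 0) :
      cos (x p) / cos (x (p + 1)) ^ 2 = 2 * tan (x (p + 1)) / tan (x p) := by
    rw [hx p]; exact cos_two_mul_div_cos_sq hs
  induction n with
  | zero => simp [hstep 0 hsin]
  | succ k ih =>
    have hsin' : sin (x (k + 1)) ≠ 0 := by
      rw [hx, sin_two_mul]
      exact mul_ne_zero (mul_ne_zero two_ne_zero hsin) (hcos (k + 1) le_rfl)
    have htan : tan (x (k + 1)) ≠ 0 := by
      rw [tan_eq_sin_div_cos]; exact div_ne_zero hsin' (hcos k k.le_succ)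
    rw [prod_range_succ, ih (fun p hp => hcos p (hp.trans k.le_succ)) hsin', hstep _ hsin]
    field_simp
    ring

theorem two_zpow_neg_natCast_succ (p : ℕ) :
    (2 : ℝ) ^ (-((p + 1 : ℕ) : ℤ)) = 2 ^ (-1 - (p : ℤ)) := by
  push_cast; ring_nf

theorem prod_cos_zpow_div_cos_sq (m : ℝ) {n : ℕ}
    (hcos : ∀ p ≤ n, cos ((2 : ℝ) ^ (-1 - (p : ℤ)) * m) ≠ 0)
    (hsin : sin ((2 : ℝ) ^ (-1 - (n : ℤ)) * m) ≠ 0) :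
    ∏ p ∈ range (n + 1), cos ((2 : ℝ) ^ (-(p : ℤ)) * m) / cos ((2 : ℝ) ^ (-1 - (p : ℤ)) * m) ^ 2
      = 2 ^ (n + 1) * tan ((2 : ℝ) ^ (-1 - (n : ℤ)) * m) / tan m := by
  simp_rw [← two_zpow_neg_natCast_succ] at hcos hsin ⊢
  simpa using prod_cos_div_cos_succ_sq (x := fun p : ℕ => (2 : ℝ) ^ (-(p : ℤ)) * m)
    (fun p => by
      rw [two_zpow_neg_natCast_succ, ← mul_assoc, ← zpow_one_add₀ two_ne_zero]; ring_nf)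
    hcos hsin

theorem product_cos_ratio_tan_ratio_general (n : ℕ) (m r : ℝ)
    (hc : ∀ p : ℕ, p ≤ n →
      Real.cos ((2:ℝ)^(-(p:ℤ)) * m) ≠ 0 ∧ Real.cos ((2:ℝ)^(-(p:ℤ)) * r) ≠ 0 ∧
      Real.cos ((2:ℝ)^(-1-(p:ℤ)) * m) ≠ 0 ∧ Real.cos ((2:ℝ)^(-1-(p:ℤ)) * r) ≠ 0)
    (htnm : Real.tan ((2:ℝ)^(-1-(n:ℤ)) * m) ≠ 0)
    (htnr : Real.tan ((2:ℝ)^(-1-(n:ℤ)) * r) ≠ 0) :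
    ∏ p ∈ Finset.range (n+1),
      (Real.cos ((2:ℝ)^(-(p:ℤ)) * m) / Real.cos ((2:ℝ)^(-(p:ℤ)) * r)) *
        (Real.cos ((2:ℝ)^(-1-(p:ℤ)) * r) / Real.cos ((2:ℝ)^(-1-(p:ℤ)) * m))^2
    = Real.tan ((2:ℝ)^(-1-(n:ℤ)) * m) * Real.tan r /
        (Real.tan m * Real.tan ((2:ℝ)^(-1-(n:ℤ)) * r)) := by
  have hsin {y : ℝ} (h : tan y ≠ 0) : sin y ≠ 0 := by
    rw [tan_eq_sin_div_cos] at h; exact (div_ne_zero_iff.mp h).1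
  have hm := prod_cos_zpow_div_cos_sq m (fun p hp => (hc p hp).2.2.1) (hsin htnm)
  have hr := prod_cos_zpow_div_cos_sq r (fun p hp => (hc p hp).2.2.2) (hsin htnr)
  have hsplit (a b c d : ℝ) : a / b * (c / d) ^ 2 = (a / d ^ 2) / (b / c ^ 2) := by
    rw [div_div_div_eq, div_pow]; ring
  simp_rw [hsplit]
  rw [prod_div_distrib, hm, hr]
  field_simp

theorem product_cos_ratio_tan_ratio (n : ℕ) (hn : 0 < n) (m r : ℝ)
    (hc : ∀ p : ℕ, p ≤ n →
      Real.cos ((2:ℝ)^(-(p:ℤ)) * m) ≠ 0 ∧ Real.cos ((2:ℝ)^(-(p:ℤ)) * r) ≠ 0 ∧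
      Real.cos ((2:ℝ)^(-1-(p:ℤ)) * m) ≠ 0 ∧ Real.cos ((2:ℝ)^(-1-(p:ℤ)) * r) ≠ 0)
    (htm : Real.tan m ≠ 0) (htr : Real.tan r ≠ 0)
    (htnm : Real.tan ((2:ℝ)^(-1-(n:ℤ)) * m) ≠ 0)
    (htnr : Real.tan ((2:ℝ)^(-1-(n:ℤ)) * r) ≠ 0)
    (hcm : Real.cos m ≠ 0) (hcr : Real.cos r ≠ 0)
    (hcnm : Real.cos ((2:ℝ)^(-1-(n:ℤ)) * m) ≠ 0)
    (hcnr : Real.cos ((2:ℝ)^(-1-(n:ℤ)) * r) ≠ 0) :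
    ∏ p ∈ Finset.range (n+1),
      (Real.cos ((2:ℝ)^(-(p:ℤ)) * m) / Real.cos ((2:ℝ)^(-(p:ℤ)) * r)) *
        (Real.cos ((2:ℝ)^(-1-(p:ℤ)) * r) / Real.cos ((2:ℝ)^(-1-(p:ℤ)) * m))^2
    = Real.tan ((2:ℝ)^(-1-(n:ℤ)) * m) * Real.tan r /
        (Real.tan m * Real.tan ((2:ℝ)^(-1-(n:ℤ)) * r)) :=
  product_cos_ratio_tan_ratio_general n m r hc htnm htnr
end

section
/- For every real a > 2, log Γ(a/4) + log Γ((a−2)/4) + (1/2)·(log Γ((a−1)/2) − log Γ(a/2) − log Γ(a)) = 2·log( π^{3/8} · 2^{2 − a/2} · (a − 3 + 1/(a−1))^{1/4} / (a − 2) ). -/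
open Real

theorem log_gamma_transformation (a : ℝ) (ha : 2 < a) (ha' : a - 3 + 1/(a-1) > 0) :
    Real.log (Real.Gamma (a/4)) + Real.log (Real.Gamma ((a-2)/4))
      + (1/2) * (Real.log (Real.Gamma ((a-1)/2)) - Real.log (Real.Gamma (a/2))
          - Real.log (Real.Gamma a))
    = 2 * Real.log (Real.pi ^ ((3:ℝ)/8) * (2:ℝ) ^ (2 - a/2)
        * (a - 3 + 1/(a-1)) ^ ((1:ℝ)/4) / (a - 2)) := by
  have h1 : (0:ℝ) < a - 1 := by linarith
  have h2 : (0:ℝ) < a - 2 := by linarith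
  have hπ : (0:ℝ) < π := pi_pos
  -- Gamma positivity
  have g1 : 0 < Real.Gamma ((a-2)/4) := Real.Gamma_pos_of_pos (by linarith)
  have g2 : 0 < Real.Gamma (a/4) := Real.Gamma_pos_of_pos (by linarith)
  have g3 : 0 < Real.Gamma ((a-1)/2) := Real.Gamma_pos_of_pos (by linarith)
  have g4 : 0 < Real.Gamma ((a-2)/2) := Real.Gamma_pos_of_pos (by linarith)
  have g5 : 0 < Real.Gamma (a/2) := Real.Gamma_pos_of_pos (by linarith)
  have g6 : 0 < Real.Gamma (a-1) := Real.Gamma_pos_of_pos (by linarith)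
  have g7 : 0 < Real.Gamma a := Real.Gamma_pos_of_pos (by linarith)
  -- duplication, instance 1
  have dup1 : Real.Gamma ((a-2)/4) * Real.Gamma (a/4)
      = Real.Gamma ((a-2)/2) * (2:ℝ) ^ (1 - 2*((a-2)/4)) * Real.sqrt π := by
    have := Real.Gamma_mul_Gamma_add_half ((a-2)/4)
    rw [show (a-2)/4 + 1/2 = a/4 by ring, show 2*((a-2)/4) = (a-2)/2 by ring] at this
    rw [this, show 2*((a-2)/4) = (a-2)/2 by ring]
  have dup2 : Real.Gamma ((a-1)/2) * Real.Gamma (a/2)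
      = Real.Gamma (a-1) * (2:ℝ) ^ (1 - 2*((a-1)/2)) * Real.sqrt π := by
    have := Real.Gamma_mul_Gamma_add_half ((a-1)/2)
    rw [show (a-1)/2 + 1/2 = a/2 by ring, show 2*((a-1)/2) = a-1 by ring] at this
    rw [this, show 2*((a-1)/2) = a-1 by ring]
  have rec1 : Real.Gamma (a/2) = ((a-2)/2) * Real.Gamma ((a-2)/2) := by
    have := Real.Gamma_add_one (s := (a-2)/2) (by positivity)
    rw [show (a-2)/2 + 1 = a/2 by ring] at this
    exact this
  have rec2 : Real.Gamma a = (a-1) * Real.Gamma (a-1) := by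
    have := Real.Gamma_add_one (s := a-1) (by positivity)
    rw [show a-1+1 = a by ring] at this
    exact this
  have hfrac : a - 3 + 1/(a-1) = (a-2)^2 / (a-1) := by
    field_simp; ring
  -- log identities
  have l1 : Real.log (Real.Gamma ((a-2)/4)) + Real.log (Real.Gamma (a/4))
      = Real.log (Real.Gamma ((a-2)/2)) + (1 - (a-2)/2) * Real.log 2
        + (1/2) * Real.log π := by
    rw [← Real.log_mul (ne_of_gt g1) (ne_of_gt g2), dup1, Real.log_mul (by positivity) (by positivity),
      Real.log_mul (ne_of_gt g4) (by positivity), Real.log_rpow two_pos, Real.log_sqrt hπ.le]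
    ring_nf
  have l2 : Real.log (Real.Gamma ((a-1)/2)) + Real.log (Real.Gamma (a/2))
      = Real.log (Real.Gamma (a-1)) + (1 - (a-1)) * Real.log 2
        + (1/2) * Real.log π := by
    rw [← Real.log_mul (ne_of_gt g3) (ne_of_gt g5), dup2, Real.log_mul (by positivity) (by positivity),
      Real.log_mul (ne_of_gt g6) (by positivity), Real.log_rpow two_pos, Real.log_sqrt hπ.le]
    ring_nf
  have l3 : Real.log (Real.Gamma (a/2)) = Real.log ((a-2)/2) + Real.log (Real.Gamma ((a-2)/2)) := by
    rw [rec1, Real.log_mul (by positivity) (ne_of_gt g4)]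
  have l4 : Real.log (Real.Gamma a) = Real.log (a-1) + Real.log (Real.Gamma (a-1)) := by
    rw [rec2, Real.log_mul (by positivity) (ne_of_gt g6)]
  -- RHS computation
  have rhsval : Real.log (Real.pi ^ ((3:ℝ)/8) * (2:ℝ) ^ (2 - a/2)
      * (a - 3 + 1/(a-1)) ^ ((1:ℝ)/4) / (a - 2))
      = (3/8) * Real.log π + (2 - a/2) * Real.log 2
        + (1/4) * (2 * Real.log (a-2) - Real.log (a-1)) - Real.log (a-2) := by
    rw [Real.log_div (by positivity) (ne_of_gt h2),
      Real.log_mul (by positivity) (by positivity),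
      Real.log_mul (by positivity) (by positivity),
      Real.log_rpow hπ, Real.log_rpow two_pos, Real.log_rpow ha', hfrac,
      Real.log_div (by positivity) (ne_of_gt h1), Real.log_pow]
    push_cast; ring
  have hlogd2 : Real.log ((a-2)/2) = Real.log (a-2) - Real.log 2 :=
    Real.log_div (ne_of_gt h2) two_ne_zero
  rw [rhsval]
  have key : Real.log (Real.Gamma (a/4)) + Real.log (Real.Gamma ((a-2)/4))
      + (1/2) * (Real.log (Real.Gamma ((a-1)/2)) - Real.log (Real.Gamma (a/2))
          - Real.log (Real.Gamma a)) =
      (Real.log (Real.Gamma ((a-2)/4)) + Real.log (Real.Gamma (a/4)))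
      + (1/2) * ((Real.log (Real.Gamma ((a-1)/2)) + Real.log (Real.Gamma (a/2)))
          - 2 * Real.log (Real.Gamma (a/2)) - Real.log (Real.Gamma a)) := by ring
  rw [key, l1, l2, l3, l4, hlogd2]
  ring
end

section
/- For every positive integer n and every real x > 0, ∏_{p=1}^{n} [ 2^{−2^{p−1} x} · Γ((2^p x + 1)/2) / Γ((2^p x + 2)/4)² ]^{2^{−p}} = 2^{−n x/2 − 2^{−n}} · (2^n x − 1)^{2^{−n}} · Γ((2^n x − 1)/2)^{2^{−n}} / Γ((x+1)/2), provided 2^p x > 1 for all 1 ≤ p ≤ n so that all Gamma arguments are positive. -/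
/-!
Since `(2^p x + 2)/4 = (2^(p-1) x + 1)/2`, the `p`-th factor equals `2^(-x/2) g p / g (p-1)` with
`g p = Γ((2^p x + 1)/2)^(2^(-p))`, so the product telescopes to `2^(-n x/2) g n / g 0`. The
functional equation `Γ(s + 1) = s Γ(s)` at `s = (2^n x - 1)/2` then puts `g n` in the stated form.
-/

open Real Finset

lemma two_rpow_neg_natCast_succ (p : ℕ) : (2:ℝ) ^ (-((p + 1 : ℕ) : ℝ)) = 2 ^ (-(p:ℝ)) / 2 := by
  rw [Nat.cast_succ, neg_add, rpow_add two_pos, rpow_neg_one, div_eq_mul_inv]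

lemma rpow_sq_two_rpow_neg_natCast_succ {a : ℝ} (ha : 0 ≤ a) (p : ℕ) :
    (a ^ 2) ^ ((2:ℝ) ^ (-((p + 1 : ℕ) : ℝ))) = a ^ ((2:ℝ) ^ (-(p:ℝ))) := by
  rw [← rpow_natCast a 2, ← rpow_mul ha, two_rpow_neg_natCast_succ, Nat.cast_ofNat,
    mul_div_cancel₀ _ two_ne_zero]

lemma two_rpow_neg_two_pow_mul_rpow_two_rpow_neg_succ (x : ℝ) (p : ℕ) :
    ((2:ℝ) ^ (-(2:ℝ) ^ (((p + 1 : ℕ) : ℝ) - 1) * x)) ^ ((2:ℝ) ^ (-((p + 1 : ℕ) : ℝ)))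
      = 2 ^ (-x / 2) := by
  have hcancel : (2:ℝ) ^ (p:ℝ) * 2 ^ (-(p:ℝ)) = 1 := by
    rw [← rpow_add two_pos, add_neg_cancel, rpow_zero]
  rw [← rpow_mul zero_le_two, two_rpow_neg_natCast_succ, Nat.cast_succ, add_sub_cancel_right]
  congr 1
  linear_combination (-x / 2) * hcancel

lemma nielsen_factor_succ {x : ℝ} (hx : 0 < x) (p : ℕ) :
    ((2:ℝ) ^ (-(2:ℝ) ^ (((p + 1 : ℕ) : ℝ) - 1) * x) * Gamma (((2:ℝ) ^ (p + 1) * x + 1) / 2)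
        / (Gamma (((2:ℝ) ^ (p + 1) * x + 2) / 4)) ^ 2) ^ ((2:ℝ) ^ (-((p + 1 : ℕ) : ℝ)))
      = 2 ^ (-x / 2) * Gamma (((2:ℝ) ^ (p + 1) * x + 1) / 2) ^ ((2:ℝ) ^ (-((p + 1 : ℕ) : ℝ)))
        / Gamma (((2:ℝ) ^ p * x + 1) / 2) ^ ((2:ℝ) ^ (-(p:ℝ))) := by
  have hquarter : ((2:ℝ) ^ (p + 1) * x + 2) / 4 = ((2:ℝ) ^ p * x + 1) / 2 := by ring
  have hA : 0 < Gamma (((2:ℝ) ^ (p + 1) * x + 1) / 2) := Gamma_pos_of_pos (by positivity)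
  have hB : 0 < Gamma (((2:ℝ) ^ p * x + 1) / 2) := Gamma_pos_of_pos (by positivity)
  rw [hquarter, div_rpow (by positivity) (by positivity), mul_rpow (by positivity) hA.le,
    two_rpow_neg_two_pow_mul_rpow_two_rpow_neg_succ, rpow_sq_two_rpow_neg_natCast_succ hB.le]

lemma nielsen_prod_telescope {x : ℝ} (hx : 0 < x) (n : ℕ) :
    ∏ p ∈ Icc 1 n,
      ((2:ℝ) ^ (-(2:ℝ) ^ ((p:ℝ) - 1) * x) * Gamma (((2:ℝ) ^ p * x + 1) / 2)
        / (Gamma (((2:ℝ) ^ p * x + 2) / 4)) ^ 2) ^ ((2:ℝ) ^ (-(p:ℝ)))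
      = 2 ^ (-(n:ℝ) * x / 2) * Gamma (((2:ℝ) ^ n * x + 1) / 2) ^ ((2:ℝ) ^ (-(n:ℝ)))
        / Gamma ((x + 1) / 2) := by
  induction n with
  | zero =>
    have hC : 0 < Gamma ((x + 1) / 2) := Gamma_pos_of_pos (by positivity)
    simp [hC.ne']
  | succ n ih =>
    have hB : 0 < Gamma (((2:ℝ) ^ n * x + 1) / 2) ^ ((2:ℝ) ^ (-(n:ℝ))) :=
      rpow_pos_of_pos (Gamma_pos_of_pos (by positivity)) _
    have hexp : (2:ℝ) ^ (-((n + 1 : ℕ) : ℝ) * x / 2) = 2 ^ (-(n:ℝ) * x / 2) * 2 ^ (-x / 2) := by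
      rw [← rpow_add two_pos]
      push_cast
      ring_nf
    rw [prod_Icc_succ_top (Nat.le_add_left 1 n), ih, nielsen_factor_succ hx, hexp]
    field_simp

theorem nielsen_product_general (n : ℕ) (hn : 0 < n) (x : ℝ)
    (hx' : ∀ p : ℕ, 1 ≤ p → p ≤ n → 1 < (2:ℝ)^p * x) :
    ∏ p ∈ Finset.Icc 1 n,
      ((2:ℝ) ^ (-(2:ℝ)^((p:ℝ)-1) * x) * Real.Gamma (((2:ℝ)^p * x + 1)/2)
        / (Real.Gamma (((2:ℝ)^p * x + 2)/4))^2) ^ ((2:ℝ)^(-(p:ℝ)))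
    = (2:ℝ) ^ (-(n:ℝ)*x/2 - (2:ℝ)^(-(n:ℝ))) * ((2:ℝ)^n * x - 1) ^ ((2:ℝ)^(-(n:ℝ)))
        * (Real.Gamma (((2:ℝ)^n * x - 1)/2)) ^ ((2:ℝ)^(-(n:ℝ)))
        / Real.Gamma ((x+1)/2) := by
  have hgt : 1 < (2:ℝ) ^ n * x := hx' n hn le_rfl
  have hx : 0 < x := pos_of_mul_pos_right (one_pos.trans hgt) (by positivity)
  have hs : 0 < ((2:ℝ) ^ n * x - 1) / 2 := by linarith
  have hG : Gamma (((2:ℝ) ^ n * x + 1) / 2)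
      = ((2:ℝ) ^ n * x - 1) / 2 * Gamma (((2:ℝ) ^ n * x - 1) / 2) := by
    rw [← Gamma_add_one hs.ne']
    ring_nf
  rw [nielsen_prod_telescope hx, hG, mul_rpow hs.le (Gamma_pos_of_pos hs).le,
    div_rpow (by linarith) zero_le_two, rpow_sub two_pos]
  ring

theorem nielsen_product (n : ℕ) (hn : 0 < n) (x : ℝ) (hx : 1/2 < x)
    (hx' : ∀ p : ℕ, 1 ≤ p → p ≤ n → 1 < (2:ℝ)^p * x) :
    ∏ p ∈ Finset.Icc 1 n,
      ((2:ℝ) ^ (-(2:ℝ)^((p:ℝ)-1) * x) * Real.Gamma (((2:ℝ)^p * x + 1)/2)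
        / (Real.Gamma (((2:ℝ)^p * x + 2)/4))^2) ^ ((2:ℝ)^(-(p:ℝ)))
    = (2:ℝ) ^ (-(n:ℝ)*x/2 - (2:ℝ)^(-(n:ℝ))) * ((2:ℝ)^n * x - 1) ^ ((2:ℝ)^(-(n:ℝ)))
        * (Real.Gamma (((2:ℝ)^n * x - 1)/2)) ^ ((2:ℝ)^(-(n:ℝ)))
        / Real.Gamma ((x+1)/2) :=
  nielsen_product_general n hn x hx'
end

section
/- For every real x with 0 < x < 1, the infinite product ∏_{p=1}^{∞} [ 2^{−2^{p−1} x} · Γ((2^p x + 1)/2) / Γ((2^p x + 2)/4)² ]^{2^{−p}} converges and equals (2e)^{−x/2} · x^{x/2} / Γ((x+1)/2). -/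
open Real Finset Filter

open scoped Nat Topology

/-!
With `z p = (2 ^ p * x + 1) / 2`, the second Gamma argument of the `p`-th factor is `z (p - 1)`.
Hence, for `L p = 2⁻ᵖ log Γ(z p) - p (x / 2) log 2` (`logGammaDyadic (x / 2) p`), the `p`-th factor
is `exp (L p - L (p - 1))` and the partial products telescope to `exp (L n - L 0)`, where
`L 0 = log Γ((x + 1) / 2)`. The weak Stirling estimate `log Γ(t) = t log t - t + o(t)`, transferred
from factorials to real arguments by the monotonicity of `Γ` on `[2, ∞)`, gives
`L n → (x / 2) log (x / 2) - x / 2`.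
-/

lemma tendsto_log_div_self_atTop : Tendsto (fun t : ℝ => log t / t) atTop (𝓝 0) := by
  simpa using isLittleO_log_id_atTop.tendsto_div_nhds_zero

lemma tendsto_log_factorial_div_sub_log :
    Tendsto (fun n : ℕ => log n ! / n - log n) atTop (𝓝 (-1)) := by
  have hstirling : Tendsto (fun n : ℕ => log (Stirling.stirlingSeq n) / n) atTop (𝓝 0) :=
    ((continuousAt_log (by positivity)).tendsto.comp
      Stirling.tendsto_stirlingSeq_sqrt_pi).div_atTop tendsto_natCast_atTop_atTop
  have hlog : Tendsto (fun n : ℕ => log (2 * n) / (2 * n)) atTop (𝓝 0) :=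
    tendsto_log_div_self_atTop.comp (tendsto_natCast_atTop_atTop.const_mul_atTop two_pos)
  have hsum := (hstirling.add hlog).add_const (-1)
  rw [add_zero, zero_add] at hsum
  refine hsum.congr' ?_
  filter_upwards [eventually_ne_atTop 0] with n hn
  have hn0 : (n : ℝ) ≠ 0 := by exact_mod_cast hn
  rw [Stirling.log_stirlingSeq_formula, log_div hn0 (exp_ne_zero 1), log_exp]
  field_simp
  ring

lemma tendsto_log_Gamma_div_sub_log :
    Tendsto (fun t : ℝ => log (Gamma t) / t - log t) atTop (𝓝 (-1)) := by
  set a : ℕ → ℝ := fun n => log n ! / n - log n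
  have ha : Tendsto a atTop (𝓝 (-1)) := tendsto_log_factorial_div_sub_log
  have hfloor : Tendsto (fun t : ℝ => ⌊t⌋₊ + 1) atTop atTop :=
    (tendsto_add_atTop_nat 1).comp tendsto_nat_floor_atTop
  have hlower : Tendsto (fun t : ℝ => a (⌊t⌋₊ + 1) - log (⌊t⌋₊ + 1 : ℕ) / (⌊t⌋₊ + 1 : ℕ)
      - log t / t) atTop (𝓝 (-1)) := by
    simpa using ((ha.comp hfloor).sub ((tendsto_log_div_self_atTop.comp
      tendsto_natCast_atTop_atTop).comp hfloor)).sub tendsto_log_div_self_atTop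
  refine tendsto_of_tendsto_of_tendsto_of_le_of_le' hlower (ha.comp tendsto_nat_floor_atTop) ?_ ?_
  all_goals
    filter_upwards [eventually_ge_atTop 2] with t ht
    set n := ⌊t⌋₊
    have hn : (2 : ℝ) ≤ n := by exact_mod_cast Nat.le_floor (by exact_mod_cast ht)
    have hnt : (n : ℝ) ≤ t := Nat.floor_le (by linarith)
    have htn : t < n + 1 := Nat.lt_floor_add_one t
    have hfact : 0 ≤ log n ! := log_nonneg (by exact_mod_cast n.factorial_pos)
    have hmono := Gamma_strictMonoOn_Ici.monotoneOn
  · -- `n ! = Γ(n + 1) ≤ Γ(t + 1) = t Γ(t)`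
    have h : log n ! ≤ log t + log (Gamma t) := by
      rw [← log_mul (by positivity) (Gamma_pos_of_pos (by linarith)).ne',
        ← Gamma_add_one (by positivity), ← Gamma_nat_eq_factorial]
      exact log_le_log (by positivity) (hmono (by simp; linarith) (by simp; linarith) (by linarith))
    have h1 : log n ! / (n + 1) ≤ log n ! / t := by gcongr
    have h2 : log t ≤ log (n + 1) := log_le_log (by linarith) htn.le
    have h3 : log n ! / t ≤ log t / t + log (Gamma t) / t := by
      rw [← add_div]; gcongr
    have hsucc : a (n + 1) - log (n + 1 : ℕ) / (n + 1 : ℕ) = log n ! / (n + 1) - log (n + 1) := by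
      simp only [a, Nat.factorial_succ, Nat.cast_mul, Nat.cast_succ]
      rw [log_mul (by positivity) (by positivity)]
      ring
    linarith
  · have h : log (Gamma t) ≤ log n ! := by
      rw [← Gamma_nat_eq_factorial]
      exact log_le_log (Gamma_pos_of_pos (by linarith))
        (hmono (by simp; linarith) (by simp; linarith) htn.le)
    have h1 : log (Gamma t) / t ≤ log n ! / t := by gcongr
    have h2 : log n ! / t ≤ log n ! / n := by gcongr
    have h3 : log n ≤ log t := log_le_log (by linarith) hnt
    simp only [a, Function.comp]
    linarith

lemma tendsto_log_Gamma_mul_add_div_sub_mul_log {c : ℝ} (hc : 0 < c) (b : ℝ) :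
    Tendsto (fun t : ℝ => log (Gamma (c * t + b)) / t - c * log t) atTop
      (𝓝 (c * log c - c)) := by
  have hz : Tendsto (fun t : ℝ => c * t + b) atTop atTop :=
    tendsto_atTop_add_const_right _ b (tendsto_id.const_mul_atTop hc)
  have hratio : Tendsto (fun t : ℝ => (c * t + b) / t) atTop (𝓝 c) := by
    have := tendsto_inv_atTop_zero.const_mul b |>.const_add c
    rw [mul_zero, add_zero] at this
    refine this.congr' ?_
    filter_upwards [eventually_gt_atTop 0] with t ht
    field_simp
  have hlim := ((hratio.mul (tendsto_log_Gamma_div_sub_log.comp hz)).add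
    (hratio.mul ((continuousAt_log hc.ne').tendsto.comp hratio))).add
    (tendsto_log_div_self_atTop.const_mul b)
  rw [mul_zero, add_zero, mul_neg_one, neg_add_eq_sub] at hlim
  refine hlim.congr' ?_
  filter_upwards [eventually_gt_atTop 0, hz.eventually_gt_atTop 0] with t ht hzt
  simp only [Function.comp, log_div hzt.ne' ht.ne']
  field_simp
  ring

noncomputable def logGammaDyadic (c : ℝ) (n : ℕ) : ℝ :=
  log (Gamma (c * 2 ^ n + 1 / 2)) / 2 ^ n - c * log (2 ^ n)

lemma tendsto_logGammaDyadic {c : ℝ} (hc : 0 < c) :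
    Tendsto (logGammaDyadic c) atTop (𝓝 (c * log c - c)) :=
  (tendsto_log_Gamma_mul_add_div_sub_mul_log hc _).comp
    (tendsto_pow_atTop_atTop_of_one_lt one_lt_two)

lemma prod_Icc_exp_sub (f : ℕ → ℝ) (n : ℕ) :
    ∏ p ∈ Icc 1 n, exp (f p - f (p - 1)) = exp (f n - f 0) := by
  rw [← exp_sum]
  congr 1
  induction n with
  | zero => simp
  | succ n ih => rw [sum_Icc_succ_top (by omega), ih, Nat.add_sub_cancel]; ring

lemma nielsen_factor_eq_exp {x : ℝ} (hx : 0 < x) {p : ℕ} (hp : p ≠ 0) :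
    ((2:ℝ) ^ (-(2:ℝ)^((p:ℝ)-1) * x) * Gamma (((2:ℝ)^p * x + 1)/2)
        / (Gamma (((2:ℝ)^p * x + 2)/4))^2) ^ ((2:ℝ)^(-(p:ℝ)))
      = exp (logGammaDyadic (x / 2) p - logGammaDyadic (x / 2) (p - 1)) := by
  obtain ⟨q, rfl⟩ := Nat.exists_eq_succ_of_ne_zero hp
  have hA : ((2:ℝ) ^ (q + 1) * x + 1) / 2 = x / 2 * 2 ^ (q + 1) + 1 / 2 := by ring
  have hB : ((2:ℝ) ^ (q + 1) * x + 2) / 4 = x / 2 * 2 ^ q + 1 / 2 := by ring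
  have hGA : 0 < Gamma (x / 2 * 2 ^ (q + 1) + 1 / 2) := Gamma_pos_of_pos (by positivity)
  have hGB : 0 < Gamma (x / 2 * 2 ^ q + 1 / 2) := Gamma_pos_of_pos (by positivity)
  have he : ((q + 1 : ℕ) : ℝ) - 1 = q := by push_cast; ring
  rw [he, rpow_natCast, rpow_neg zero_le_two, rpow_natCast, hA, hB, rpow_def_of_pos (by positivity),
    log_div (by positivity) (by positivity), log_mul (by positivity) hGA.ne', log_rpow two_pos,
    log_pow]
  simp only [logGammaDyadic, log_pow]
  congr 1
  push_cast
  field_simp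
  ring

theorem nielsen_infinite_product_general (x : ℝ) (hx0 : 0 < x) :
    Filter.Tendsto (fun n : ℕ => ∏ p ∈ Finset.Icc 1 n,
      ((2:ℝ) ^ (-(2:ℝ)^((p:ℝ)-1) * x) * Real.Gamma (((2:ℝ)^p * x + 1)/2)
        / (Real.Gamma (((2:ℝ)^p * x + 2)/4))^2) ^ ((2:ℝ)^(-(p:ℝ))))
      Filter.atTop
      (nhds ((2 * Real.exp 1) ^ (-x/2) * x ^ (x/2) / Real.Gamma ((x+1)/2))) := by
  have hprod : ∀ n : ℕ, ∏ p ∈ Icc 1 n,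
      ((2:ℝ) ^ (-(2:ℝ)^((p:ℝ)-1) * x) * Gamma (((2:ℝ)^p * x + 1)/2)
        / (Gamma (((2:ℝ)^p * x + 2)/4))^2) ^ ((2:ℝ)^(-(p:ℝ)))
      = exp (logGammaDyadic (x / 2) n - logGammaDyadic (x / 2) 0) := fun n => by
    rw [prod_congr rfl fun p hp => nielsen_factor_eq_exp hx0 (by simp at hp; omega),
      prod_Icc_exp_sub]
  have hvalue : exp (x / 2 * log (x / 2) - x / 2 - logGammaDyadic (x / 2) 0)
      = (2 * exp 1) ^ (-x/2) * x ^ (x/2) / Gamma ((x+1)/2) := by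
    have hG : 0 < Gamma ((x + 1) / 2) := Gamma_pos_of_pos (by positivity)
    rw [logGammaDyadic, pow_zero, div_one, log_one, mul_zero, sub_zero,
      show x / 2 * 1 + 1 / 2 = (x + 1) / 2 by ring, exp_sub, exp_log hG,
      rpow_def_of_pos (by positivity), rpow_def_of_pos hx0, ← exp_add,
      log_mul two_ne_zero (exp_ne_zero 1), log_exp, log_div hx0.ne' two_ne_zero]
    ring_nf
  simp_rw [hprod, ← hvalue]
  exact (continuous_exp.tendsto _).comp ((tendsto_logGammaDyadic (half_pos hx0)).sub_const _)

theorem nielsen_infinite_product (x : ℝ) (hx0 : 0 < x) (hx1 : x < 1) :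
    Filter.Tendsto (fun n : ℕ => ∏ p ∈ Finset.Icc 1 n,
      ((2:ℝ) ^ (-(2:ℝ)^((p:ℝ)-1) * x) * Real.Gamma (((2:ℝ)^p * x + 1)/2)
        / (Real.Gamma (((2:ℝ)^p * x + 2)/4))^2) ^ ((2:ℝ)^(-(p:ℝ))))
      Filter.atTop
      (nhds ((2 * Real.exp 1) ^ (-x/2) * x ^ (x/2) / Real.Gamma ((x+1)/2))) :=
  nielsen_infinite_product_general x hx0
end

section
/- For every positive integer n and every real x > 1/2, the limit as n → ∞ of 2^{−n x/2 − 2^{−n}} · (2^n x − 1)^{2^{−n}} · exp(2^{−n} · log Γ((2^n x − 1)/2)) equals (2e)^{−x/2} · x^{x/2}. -/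
/-!
Write `q = 2 ^ n`. The functional equation `Γ(s + 1) = s Γ(s)` at `s = (q x - 1) / 2` absorbs the
factors `2 ^ (-1/q) (q x - 1) ^ (1/q)`, so the `n`-th term is `q ^ (-x/2) Γ(s + 1) ^ (1/q)` with
`s + 1 = q x / 2 + 1 / 2`. Taking logarithms, everything reduces to the crude Stirling formula
`log Γ(s + a) = s log s - s + o(s)`, which follows from Stirling's formula for factorials because
`Γ` is monotone on `[2, ∞)`.
-/

open Real Filter Topology Asymptotics
open scoped Nat

lemma abs_mul_log_sub_self_sub_le {p q : ℝ} (hp : 1 ≤ p) (hq : 1 ≤ q) :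
    |(q * log q - q) - (p * log p - p)| ≤ |q - p| * log (max p q) := by
  wlog hpq : p ≤ q generalizing p q
  · rw [abs_sub_comm, abs_sub_comm q, max_comm]
    exact this hq hp (le_of_not_ge hpq)
  have hp0 : 0 < p := by linarith
  have hq0 : 0 < q := by linarith
  have h_upper : p * (log q - log p) ≤ q - p := by
    rw [← log_div hq0.ne' hp0.ne']
    calc p * log (q / p) ≤ p * (q / p - 1) :=
          mul_le_mul_of_nonneg_left (log_le_sub_one_of_pos (by positivity)) hp0.le
      _ = q - p := by field_simp
  have h_lower : q - p ≤ q * (log q - log p) := by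
    rw [← log_div hq0.ne' hp0.ne']
    calc q - p = q * (1 - (q / p)⁻¹) := by field_simp
      _ ≤ q * log (q / p) :=
          mul_le_mul_of_nonneg_left (one_sub_inv_le_log_of_pos (by positivity)) hq0.le
  have hlogp := log_nonneg hp
  have hlogpq := log_le_log hp0 hpq
  rw [max_eq_right hpq, abs_of_nonneg (sub_nonneg.2 hpq), abs_le]
  constructor <;> nlinarith

lemma isLittleO_log_factorial_sub :
    (fun n : ℕ => log (n ! : ℝ) - (n * log n - n)) =o[atTop] (fun n => (n : ℝ)) := by
  have h_eq : ∀ n : ℕ, log (n ! : ℝ) - (n * log n - n) =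
      log (Stirling.stirlingSeq n) + log (2 * n) / 2 := by
    intro n
    rcases eq_or_ne n 0 with rfl | hn
    · simp
    rw [Stirling.log_stirlingSeq_formula, log_div (by positivity) (exp_ne_zero 1), log_exp]
    ring
  simp only [h_eq]
  have h_natCast := tendsto_natCast_atTop_atTop (R := ℝ)
  refine IsLittleO.add ?_ ?_
  · have h_bdd := (Stirling.tendsto_stirlingSeq_sqrt_pi.log (by positivity)).isBigO_one ℝ
    refine h_bdd.trans_isLittleO ?_
    exact (isLittleO_const_id_atTop (1 : ℝ)).comp_tendsto h_natCast
  · have h_log := (isLittleO_log_id_atTop.comp_tendsto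
      (h_natCast.const_mul_atTop two_pos)).const_mul_left (1 / 2 : ℝ)
    refine (h_log.trans_isBigO ?_).congr_left fun n => ?_
    · exact (isBigO_refl _ _).const_mul_left 2
    · simp only [Function.comp, one_div]; ring

lemma abs_log_Gamma_sub_le {t : ℝ} (ht : 2 ≤ t) :
    |log (Gamma t) - (t * log t - t)| ≤
      |log (⌊t⌋₊ ! : ℝ) - (⌊t⌋₊ * log ⌊t⌋₊ - ⌊t⌋₊)| + 2 * log t := by
  set m := ⌊t⌋₊
  have hm : (2 : ℝ) ≤ m := by exact_mod_cast Nat.le_floor (by exact_mod_cast ht)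
  have hmt : (m : ℝ) ≤ t := Nat.floor_le (by linarith)
  have htm : t ≤ m + 1 := (Nat.lt_floor_add_one t).le
  have h_mono := Real.Gamma_strictMonoOn_Ici.monotoneOn
  have h_lo : log (Gamma m) ≤ log (Gamma t) :=
    log_le_log (Gamma_pos_of_pos (by linarith)) (h_mono hm ht hmt)
  have h_hi : log (Gamma t) ≤ log (Gamma (m + 1)) :=
    log_le_log (Gamma_pos_of_pos (by linarith))
      (h_mono ht (by simp only [Set.mem_Ici]; linarith) htm)
  have h_succ : log (Gamma (m + 1)) = log m + log (Gamma m) := by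
    rw [Gamma_add_one (by positivity), log_mul (by positivity) (Gamma_pos_of_pos (by linarith)).ne']
  have h_fact : log (Gamma (m + 1)) = log (m ! : ℝ) := by rw [Gamma_nat_eq_factorial]
  have h_logm : log m ≤ log t := log_le_log (by linarith) hmt
  have h_shift : |(t * log t - t) - (m * log m - m)| ≤ log t := by
    calc _ ≤ |t - m| * log (max m t) := abs_mul_log_sub_self_sub_le (by linarith) (by linarith)
      _ ≤ 1 * log t := by
        rw [max_eq_right hmt, abs_of_nonneg (by linarith)]
        exact mul_le_mul_of_nonneg_right (by linarith) (log_nonneg (by linarith))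
      _ = log t := one_mul _
  rw [abs_le] at h_shift ⊢
  have := le_abs_self (log (m ! : ℝ) - (m * log m - m))
  have := neg_abs_le (log (m ! : ℝ) - (m * log m - m))
  constructor <;> linarith [h_shift.1, h_shift.2]

lemma isLittleO_log_Gamma_sub :
    (fun t => log (Gamma t) - (t * log t - t)) =o[atTop] id := by
  have h_floor :
      (fun t : ℝ => |log (⌊t⌋₊ ! : ℝ) - (⌊t⌋₊ * log ⌊t⌋₊ - ⌊t⌋₊)|) =o[atTop] id := by
    refine (isLittleO_log_factorial_sub.comp_tendsto tendsto_nat_floor_atTop).abs_left.trans_isBigO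
      ?_
    refine IsBigO.of_bound 1 ?_
    filter_upwards [eventually_ge_atTop 0] with t ht
    simp [abs_of_nonneg ht, Nat.floor_le ht]
  refine IsBigO.trans_isLittleO ?_ (h_floor.add (isLittleO_log_id_atTop.const_mul_left 2))
  refine IsBigO.of_bound 1 ?_
  filter_upwards [eventually_ge_atTop 2] with t ht
  have h_log : 0 ≤ 2 * log t := by have := log_nonneg (by linarith : (1 : ℝ) ≤ t); positivity
  rw [one_mul, norm_of_nonneg (add_nonneg (abs_nonneg _) h_log), Real.norm_eq_abs]
  exact abs_log_Gamma_sub_le ht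

lemma isBigO_add_const_id (c : ℝ) : (fun s : ℝ => s + c) =O[atTop] id :=
  (isBigO_refl _ _).add (isLittleO_const_id_atTop c).isBigO

lemma isLittleO_log_Gamma_add_sub (a : ℝ) :
    (fun s => log (Gamma (s + a)) - (s * log s - s)) =o[atTop] id := by
  have h_shift := tendsto_atTop_add_const_right atTop a tendsto_id
  have h_Gamma : (fun s => log (Gamma (s + a)) - ((s + a) * log (s + a) - (s + a))) =o[atTop] id :=
    (isLittleO_log_Gamma_sub.comp_tendsto h_shift).trans_isBigO (isBigO_add_const_id a)
  have h_log : (fun s => |a| * log (s + |a|)) =o[atTop] id :=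
    ((isLittleO_log_id_atTop.comp_tendsto (tendsto_atTop_add_const_right atTop |a| tendsto_id)
      ).trans_isBigO (isBigO_add_const_id |a|)).const_mul_left |a|
  have h_diff : (fun s => ((s + a) * log (s + a) - (s + a)) - (s * log s - s)) =O[atTop]
      (fun s => |a| * log (s + |a|)) := by
    refine IsBigO.of_bound 1 ?_
    filter_upwards [eventually_ge_atTop (1 + |a|)] with s hs
    have h1 : 1 ≤ s + a := by linarith [neg_abs_le a]
    have h_max : max s (s + a) ≤ s + |a| :=
      max_le (by linarith [abs_nonneg a]) (by linarith [le_abs_self a])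
    have h_max_pos : 0 < max s (s + a) :=
      lt_of_lt_of_le (by linarith [abs_nonneg a]) (le_max_left _ _)
    have h_log : 0 ≤ log (s + |a|) := log_nonneg (by linarith [abs_nonneg a])
    rw [one_mul, Real.norm_eq_abs, Real.norm_eq_abs,
      abs_of_nonneg (mul_nonneg (abs_nonneg a) h_log)]
    calc _ ≤ |s + a - s| * log (max s (s + a)) :=
          abs_mul_log_sub_self_sub_le (by linarith [abs_nonneg a]) h1
      _ ≤ |a| * log (s + |a|) := by
        rw [add_sub_cancel_left]
        exact mul_le_mul_of_nonneg_left (log_le_log h_max_pos h_max) (abs_nonneg a)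
  exact (h_Gamma.add (h_diff.trans_isLittleO h_log)).congr_left fun s => by ring

lemma tendsto_log_Gamma_add_div_sub_log (a : ℝ) :
    Tendsto (fun s => log (Gamma (s + a)) / s - log s) atTop (𝓝 (-1)) := by
  have := (isLittleO_log_Gamma_add_sub a).tendsto_div_nhds_zero.sub_const 1
  rw [zero_sub] at this
  refine this.congr' ?_
  filter_upwards [eventually_gt_atTop 0] with s hs
  simp only [id]
  field_simp
  ring

lemma div_two_rpow_mul_rpow_mul_Gamma_rpow {y : ℝ} (hy : 1 < y) (c : ℝ) :
    (y - 1) ^ c * exp (c * log (Gamma ((y - 1) / 2))) / 2 ^ c = Gamma ((y + 1) / 2) ^ c := by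
  have h_pos : 0 < (y - 1) / 2 := by linarith
  rw [show (y + 1) / 2 = (y - 1) / 2 + 1 by ring, Gamma_add_one h_pos.ne',
    mul_rpow h_pos.le (Gamma_pos_of_pos h_pos).le, div_rpow (by linarith) zero_le_two,
    rpow_def_of_pos (Gamma_pos_of_pos h_pos), mul_comm c]
  ring

lemma tendsto_rpow_neg_mul_Gamma_rpow_inv {x : ℝ} (hx : 0 < x) :
    Tendsto (fun q => q ^ (-x / 2) * Gamma ((q * x + 1) / 2) ^ q⁻¹) atTop
      (𝓝 ((2 * exp 1) ^ (-x / 2) * x ^ (x / 2))) := by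
  have h_lim := (tendsto_log_Gamma_add_div_sub_log (1 / 2)).comp
    ((tendsto_id.atTop_mul_const hx).atTop_div_const two_pos)
  have h_exp := (continuous_exp.tendsto _).comp ((h_lim.const_add (log (x / 2))).const_mul (x / 2))
  convert h_exp.congr' ?_ using 2
  · rw [rpow_def_of_pos (by positivity), rpow_def_of_pos hx, ← exp_add,
      log_mul two_ne_zero (exp_ne_zero 1), log_exp, log_div hx.ne' two_ne_zero]
    ring_nf
  filter_upwards [eventually_gt_atTop 0] with q hq
  rw [Function.comp_apply, Function.comp_apply, id, rpow_def_of_pos hq,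
    rpow_def_of_pos (Gamma_pos_of_pos (by positivity)), ← exp_add, log_div hx.ne' two_ne_zero,
    log_div (mul_pos hq hx).ne' two_ne_zero, log_mul hq.ne' hx.ne',
    show q * x / 2 + 1 / 2 = (q * x + 1) / 2 by ring]
  congr 1
  field_simp
  ring

theorem nielsen_limit (x : ℝ) (hx : 1/2 < x) :
    Filter.Tendsto (fun n : ℕ =>
      (2:ℝ) ^ (-(n:ℝ)*x/2 - (2:ℝ)^(-(n:ℝ))) * ((2:ℝ)^n * x - 1) ^ ((2:ℝ)^(-(n:ℝ)))
        * Real.exp ((2:ℝ)^(-(n:ℝ)) * Real.log (Real.Gamma (((2:ℝ)^n * x - 1)/2))))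
      Filter.atTop
      (nhds ((2 * Real.exp 1) ^ (-x/2) * x ^ (x/2))) := by
  have hx0 : 0 < x := by linarith
  have h_pow := tendsto_pow_atTop_atTop_of_one_lt (one_lt_two (α := ℝ))
  refine ((tendsto_rpow_neg_mul_Gamma_rpow_inv hx0).comp h_pow).congr' ?_
  filter_upwards [(h_pow.atTop_mul_const hx0).eventually_gt_atTop 1] with n hn
  have h_inv : (2 : ℝ) ^ (-(n : ℝ)) = ((2 : ℝ) ^ n)⁻¹ := by
    rw [rpow_neg zero_le_two, rpow_natCast]
  have h_pow_neg : (2 : ℝ) ^ (-(n : ℝ) * x / 2) = ((2 : ℝ) ^ n) ^ (-x / 2) := by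
    rw [← rpow_natCast, ← rpow_mul zero_le_two]; ring_nf
  rw [Function.comp_apply, rpow_sub two_pos, h_pow_neg, h_inv,
    ← div_two_rpow_mul_rpow_mul_Gamma_rpow hn]
  ring
end

section
/- For every positive integer n and real x with 2^p x − 1 > 0 for all 0 ≤ p ≤ n (e.g., x > 1), log of ∏_{p=1}^{n} [2^{−2^{p−1}x} Γ((2^p x+1)/2)/Γ((2^p x+2)/4)²]^{2^{−p}} equals log( 2^{−nx/2 − 2^{−n}} (2^n x − 1)^{2^{−n}} Γ((2^n x−1)/2)^{2^{−n}} / Γ((x+1)/2) ). -/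
open Real Finset

private lemma log_f_aux (c E u g gx : ℝ) (hu : 0 < u) (hg : 0 < g) (hgx : 0 < gx) :
    Real.log ((2:ℝ)^c * u^E * g^E / gx)
      = c * Real.log 2 + E * Real.log u + E * Real.log g - Real.log gx := by
  rw [Real.log_div (by positivity) hgx.ne', Real.log_mul (by positivity) (by positivity),
    Real.log_mul (by positivity) (by positivity), Real.log_rpow two_pos,
    Real.log_rpow hu, Real.log_rpow hg]

private lemma log_t_aux (c E g1 g2 : ℝ) (hg1 : 0 < g1) (hg2 : 0 < g2) :
    Real.log (((2:ℝ)^c * g1 / g2^2)^E)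
      = E * (c * Real.log 2 + Real.log g1 - 2 * Real.log g2) := by
  rw [Real.log_rpow (by positivity), Real.log_div (by positivity) (by positivity),
    Real.log_mul (by positivity) hg1.ne', Real.log_rpow two_pos, Real.log_pow]
  push_cast; ring

theorem nielsen_product_log (n : ℕ) (hn : 0 < n) (x : ℝ)
    (hx : ∀ p : ℕ, p ≤ n → 0 < (2:ℝ)^p * x - 1) :
    Real.log (∏ p ∈ Finset.Icc 1 n,
      ((2:ℝ) ^ (-(2:ℝ)^((p:ℝ)-1) * x) * Real.Gamma (((2:ℝ)^p * x + 1)/2)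
        / (Real.Gamma (((2:ℝ)^p * x + 2)/4))^2) ^ ((2:ℝ)^(-(p:ℝ))))
    = Real.log ((2:ℝ) ^ (-(n:ℝ)*x/2 - (2:ℝ)^(-(n:ℝ)))
        * ((2:ℝ)^n * x - 1) ^ ((2:ℝ)^(-(n:ℝ)))
        * (Real.Gamma (((2:ℝ)^n * x - 1)/2)) ^ ((2:ℝ)^(-(n:ℝ)))
        / Real.Gamma ((x+1)/2)) := by
  clear hn
  induction n with
  | zero =>
    have h0 : 0 < x - 1 := by have := hx 0 le_rfl; simpa using this
    have hgx : (0:ℝ) < (x-1)/2 := by linarith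
    rw [Finset.Icc_eq_empty (by omega), Finset.prod_empty, Real.log_one]
    have hf : (2:ℝ) ^ (-((0:ℕ):ℝ)*x/2 - (2:ℝ)^(-((0:ℕ):ℝ)))
        * ((2:ℝ)^(0:ℕ) * x - 1) ^ ((2:ℝ)^(-((0:ℕ):ℝ)))
        * (Real.Gamma (((2:ℝ)^(0:ℕ) * x - 1)/2)) ^ ((2:ℝ)^(-((0:ℕ):ℝ)))
        / Real.Gamma ((x+1)/2) = 1 := by
      have hG : Real.Gamma ((x+1)/2) = ((x-1)/2) * Real.Gamma ((x-1)/2) := by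
        rw [show (x+1)/2 = (x-1)/2 + 1 by ring, Real.Gamma_add_one hgx.ne']
      have hGp := Real.Gamma_pos_of_pos hgx
      simp only [Nat.cast_zero, neg_zero, zero_mul, zero_div, Real.rpow_zero, pow_zero,
        one_mul, Real.rpow_one, zero_sub, Real.rpow_neg_one, hG]
      field_simp
    rw [hf, Real.log_one]
  | succ n ih =>
    have hxn : ∀ p : ℕ, p ≤ n → 0 < (2:ℝ)^p * x - 1 := fun p hp => hx p (hp.trans n.le_succ)
    have ha : 0 < (2:ℝ)^n * x - 1 := hx n n.le_succ
    have hb : 0 < (2:ℝ)^(n+1) * x - 1 := hx (n+1) le_rfl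
    have hgx : (0:ℝ) < (x+1)/2 := by
      have := hx 0 (Nat.zero_le _); simp at this; linarith
    have hGx := Real.Gamma_pos_of_pos hgx
    have ha2 : (0:ℝ) < ((2:ℝ)^n * x - 1)/2 := by linarith
    have hb2 : (0:ℝ) < ((2:ℝ)^(n+1) * x - 1)/2 := by linarith
    have hGa := Real.Gamma_pos_of_pos ha2
    have hGb := Real.Gamma_pos_of_pos hb2
    have hga1 : (0:ℝ) < ((2:ℝ)^(n+1) * x + 1)/2 := by linarith
    have hga2 : (0:ℝ) < ((2:ℝ)^(n+1) * x + 2)/4 := by linarith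
    have hprodpos : 0 < ∏ p ∈ Finset.Icc 1 n,
        ((2:ℝ) ^ (-(2:ℝ)^((p:ℝ)-1) * x) * Real.Gamma (((2:ℝ)^p * x + 1)/2)
          / (Real.Gamma (((2:ℝ)^p * x + 2)/4))^2) ^ ((2:ℝ)^(-(p:ℝ))) := by
      apply Finset.prod_pos
      intro p hp
      simp only [Finset.mem_Icc] at hp
      have h1 : 0 < (2:ℝ)^p * x - 1 := hxn p hp.2
      have hp1 : (0:ℝ) < ((2:ℝ)^p * x + 1)/2 := by linarith
      have hp2 : (0:ℝ) < ((2:ℝ)^p * x + 2)/4 := by linarith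
      have := Real.Gamma_pos_of_pos hp1
      have := Real.Gamma_pos_of_pos hp2
      positivity
    have htpos : 0 < ((2:ℝ) ^ (-(2:ℝ)^(((n+1:ℕ):ℝ)-1) * x) * Real.Gamma (((2:ℝ)^(n+1) * x + 1)/2)
          / (Real.Gamma (((2:ℝ)^(n+1) * x + 2)/4))^2) ^ ((2:ℝ)^(-((n+1:ℕ):ℝ))) := by
      have := Real.Gamma_pos_of_pos hga1
      have := Real.Gamma_pos_of_pos hga2
      positivity
    rw [Finset.prod_Icc_succ_top (Nat.le_add_left 1 n),
      Real.log_mul hprodpos.ne' htpos.ne', ih hxn]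
    -- Gamma recurrence rewrites
    have hg1 : Real.Gamma (((2:ℝ)^(n+1) * x + 1)/2)
        = (((2:ℝ)^(n+1) * x - 1)/2) * Real.Gamma (((2:ℝ)^(n+1) * x - 1)/2) := by
      rw [show ((2:ℝ)^(n+1) * x + 1)/2 = ((2:ℝ)^(n+1) * x - 1)/2 + 1 by ring,
        Real.Gamma_add_one hb2.ne']
    have hg2 : Real.Gamma (((2:ℝ)^(n+1) * x + 2)/4)
        = (((2:ℝ)^n * x - 1)/2) * Real.Gamma (((2:ℝ)^n * x - 1)/2) := by
      rw [show ((2:ℝ)^(n+1) * x + 2)/4 = ((2:ℝ)^n * x - 1)/2 + 1 by ring,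
        Real.Gamma_add_one ha2.ne']
    rw [hg1, hg2]
    rw [log_f_aux _ _ _ _ _ ha hGa hGx, log_f_aux _ _ _ _ _ hb hGb hGx,
      log_t_aux _ _ _ _ (by positivity) (by positivity),
      Real.log_mul hb2.ne' hGb.ne', Real.log_mul ha2.ne' hGa.ne',
      Real.log_div (by linarith : ((2:ℝ)^(n+1) * x - 1) ≠ 0) two_ne_zero,
      Real.log_div (by linarith : ((2:ℝ)^n * x - 1) ≠ 0) two_ne_zero]
    have e1 : (2:ℝ)^(-((n+1:ℕ):ℝ)) = (2:ℝ)^(-(n:ℝ)) * (2:ℝ)^(-1:ℝ) := by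
      push_cast
      rw [← Real.rpow_add two_pos]; ring_nf
    have e2 : (2:ℝ)^(((n+1:ℕ):ℝ)-1) = (2:ℝ)^n := by
      push_cast
      rw [add_sub_cancel_right, Real.rpow_natCast]
    have e3 : (2:ℝ)^(n+1) = 2 * (2:ℝ)^n := by ring
    have hEA : (2:ℝ)^(-(n:ℝ)) * (2:ℝ)^n = 1 := by
      rw [← Real.rpow_natCast 2 n, ← Real.rpow_add two_pos]
      norm_num
    have e4 : (2:ℝ)^(-1:ℝ) = 1/2 := by
      rw [Real.rpow_neg_one]; norm_num
    rw [e1, e2, e3, e4] at *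
    push_cast
    linear_combination (-(x * Real.log 2)/2) * hEA
end
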